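/- arXiv:2402.08992 — 6 statements merged into one kernel-verified Lean document; each statement's English description precedes it below -/
import Mathlib

section
/- Suppose z̃ ∈ M and ε > 0 satisfy |{i ∈ {1,…,n} : d(z^i, z̃) ≤ ε}| > 2n/3. Then every index j with ρ_j ≤ ρ̄ satisfies d(z^j, z̃) ≤ 3ε. -/
/-- In a metric space, given points `z^1, …, z^n`, let
`ρ_j` be the smallest value among `{d(z^i, z^j) : i}` such that more than `2n/3` of the
points lie within distance `ρ_j` of `z^j`, and let `ρ̄` be the `⌈2n/3⌉`-th smallest of
`(ρ_1, …, ρ_n)` (counted with multiplicity).  If `z̃` and `ε > 0` satisfy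
`|{i : d(z^i, z̃) ≤ ε}| > 2n/3`, then every index `j` with `ρ_j ≤ ρ̄` satisfies
`d(z^j, z̃) ≤ 3ε`. -/
theorem stmt_4 {M : Type*} [MetricSpace M] (n : ℕ) (hn : 1 ≤ n) (z : Fin n → M)
    (ρ : Fin n → ℝ) (ρbar : ℝ)
    -- `ρ j` is a value of the list of distances to `z j` …
    (hρ_mem : ∀ j, ∃ i, ρ j = dist (z i) (z j))
    -- … whose ball captures more than `2n/3` of the points …
    (hρ_card : ∀ j, 2 * (n : ℝ) / 3 < ({i : Fin n | dist (z i) (z j) ≤ ρ j}.ncard : ℝ))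
    -- … and it is the smallest such value.
    (hρ_min : ∀ j i,
      2 * (n : ℝ) / 3 < ({i' : Fin n | dist (z i') (z j) ≤ dist (z i) (z j)}.ncard : ℝ) →
      ρ j ≤ dist (z i) (z j))
    -- `ρbar` is the `⌈2n/3⌉`-th smallest value of `(ρ_1, …, ρ_n)` with multiplicity:
    (hρbar_le : ⌈2 * (n : ℝ) / 3⌉₊ ≤ {j : Fin n | ρ j ≤ ρbar}.ncard)
    (hρbar_lt : {j : Fin n | ρ j < ρbar}.ncard < ⌈2 * (n : ℝ) / 3⌉₊)
    (ztil : M) (ε : ℝ) (hε : 0 < ε)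
    (hcap : 2 * (n : ℝ) / 3 < ({i : Fin n | dist (z i) ztil ≤ ε}.ncard : ℝ)) :
    ∀ j, ρ j ≤ ρbar → dist (z j) ztil ≤ 3 * ε := by
  intro j hj
  set A : Set (Fin n) := {i : Fin n | dist (z i) ztil ≤ ε} with hA
  have hn0 : (0:ℝ) < 2 * (n : ℝ) / 3 := by
    have : (1:ℝ) ≤ (n:ℝ) := by exact_mod_cast hn
    linarith
  -- A is nonempty
  have hAne : A.Nonempty := by
    rw [Set.nonempty_iff_ne_empty]
    intro h
    rw [h] at hcap
    simp at hcap
    linarith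
  -- every k in A has ρ k ≤ 2ε
  have key : ∀ k ∈ A, ρ k ≤ 2 * ε := by
    intro k hk
    obtain ⟨a, ha, hmax⟩ := Set.exists_max_image A (fun i => dist (z i) (z k))
      (Set.toFinite A) hAne
    have hsub : A ⊆ {i' : Fin n | dist (z i') (z k) ≤ dist (z a) (z k)} := by
      intro b hb; exact hmax b hb
    have hcard : 2 * (n : ℝ) / 3 <
        (({i' : Fin n | dist (z i') (z k) ≤ dist (z a) (z k)}.ncard : ℝ)) := by
      have := Set.ncard_le_ncard hsub (Set.toFinite _)
      calc 2 * (n : ℝ) / 3 < (A.ncard : ℝ) := hcap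
        _ ≤ _ := by exact_mod_cast this
    have h1 := hρ_min k a hcard
    have h2 : dist (z a) (z k) ≤ 2 * ε := by
      have ha' : dist (z a) ztil ≤ ε := ha
      have hk' : dist (z k) ztil ≤ ε := hk
      calc dist (z a) (z k) ≤ dist (z a) ztil + dist ztil (z k) := dist_triangle _ _ _
        _ = dist (z a) ztil + dist (z k) ztil := by rw [dist_comm ztil]
        _ ≤ 2 * ε := by linarith
    linarith
  -- ρbar ≤ 2ε
  have hρbar : ρbar ≤ 2 * ε := by
    by_contra h
    push_neg at h
    have hsub : A ⊆ {j : Fin n | ρ j < ρbar} := by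
      intro k hk
      exact lt_of_le_of_lt (key k hk) h
    have h1 : (({j : Fin n | ρ j < ρbar}.ncard : ℝ)) < 2 * (n : ℝ) / 3 :=
      Nat.lt_ceil.mp hρbar_lt
    have h2 := Set.ncard_le_ncard hsub (Set.toFinite _)
    have h3 : (A.ncard : ℝ) ≤ (({j : Fin n | ρ j < ρbar}.ncard : ℝ)) := by exact_mod_cast h2
    linarith
  -- intersection of A with the ρ j ball is nonempty
  set B : Set (Fin n) := {i : Fin n | dist (z i) (z j) ≤ ρ j} with hB
  have hBcard := hρ_card j
  have hinter : (A ∩ B).Nonempty := by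
    rw [Set.nonempty_iff_ne_empty]
    intro h
    have h1 := Set.ncard_inter_add_ncard_union A B (Set.toFinite _) (Set.toFinite _)
    have h2 : (A ∪ B).ncard ≤ n := by
      have := Set.ncard_le_ncard (Set.subset_univ (A ∪ B)) (Set.toFinite _)
      simpa [Set.ncard_univ] using this
    rw [h, Set.ncard_empty] at h1
    have h3 : A.ncard + B.ncard ≤ n := by omega
    have h4 : (A.ncard : ℝ) + (B.ncard : ℝ) ≤ (n : ℝ) := by exact_mod_cast h3
    linarith
  obtain ⟨i, hiA, hiB⟩ := hinter
  have h1 : dist (z i) ztil ≤ ε := hiA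
  have h2 : dist (z i) (z j) ≤ ρ j := hiB
  calc dist (z j) ztil ≤ dist (z j) (z i) + dist (z i) ztil := dist_triangle _ _ _
    _ = dist (z i) (z j) + dist (z i) ztil := by rw [dist_comm]
    _ ≤ ρ j + ε := by linarith
    _ ≤ ρbar + ε := by linarith
    _ ≤ 3 * ε := by linarith
end

section
/- Assume α ≥ (I/2 + λL)/(1 + I/2 + λL). Then for every i ≥ 2, t_i ≤ α·t_{i−1} + (1−α)·r_{i−1}, and consequently t_i ≤ α^{i−1}·t_1 + (1−α)·Σ_{j=1}^{i−1} α^{i−j−1}·r_j. -/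
/-!
Each `𝓛 i` is convex, so `𝓛 i + ‖· - x₀‖² / (2λ)` is `1/λ`-strongly convex, and its minimality at
`x i` gives the quadratic growth `𝓛ᵢ^λ(y) ≥ 𝓛ᵢ^λ(xᵢ) + ‖y - xᵢ‖² / (2λ)`. Unfolding the recursions,
`t (i+1) - α t i` is at most `(1 - α)` times the linearization error
`f(xᵢ₊₁) - f(xᵢ) - ⟪sᵢ, xᵢ₊₁ - xᵢ⟫` minus `α ‖xᵢ₊₁ - xᵢ‖² / (2λ)`. The descent lemma and Young's
inequality bound the error by `(λ/I) ‖∇f(xᵢ) - sᵢ‖² + (L/2 + I/(4λ)) ‖xᵢ₊₁ - xᵢ‖²`, and the lower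
bound on `α` is exactly what lets the growth term absorb the quadratic part. Unrolling the
one-step inequality gives the summed bound.
-/

open scoped RealInnerProductSpace
open Filter Topology

section InnerProduct

variable {E : Type*} [NormedAddCommGroup E] [InnerProductSpace ℝ E] {s : Set E}

theorem ConvexOn.affine_add {h : E → ℝ} (hh : ConvexOn ℝ s h) (c : ℝ) (v w : E) :
    ConvexOn ℝ s fun y => c + ⟪v, y - w⟫ + h y := by
  have haff : ConvexOn ℝ s fun y => c + ⟪v, y - w⟫ := by
    refine ⟨hh.1, fun p _ q _ a b _ _ hab => le_of_eq ?_⟩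
    simp only [smul_eq_mul, inner_sub_right, inner_add_right, real_inner_smul_right]
    linear_combination (⟪v, w⟫ - c) * hab
  exact haff.add hh

theorem ConvexOn.strongConvexOn_add_sq_norm_sub {G : E → ℝ} (hG : ConvexOn ℝ s G) (c : ℝ)
    (x₀ : E) : StrongConvexOn s (2 * c) fun y => G y + c * ‖y - x₀‖ ^ 2 := by
  rw [strongConvexOn_iff_convex]
  convert hG.affine_add (c * ‖x₀‖ ^ 2) (-(2 * c) • x₀) 0 using 1
  ext y
  simp only [norm_sub_sq_real, sub_zero, real_inner_smul_left, real_inner_comm x₀ y]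
  ring

theorem StrongConvexOn.add_sq_norm_sub_le_of_isMinOn {Φ : E → ℝ} {m : ℝ} {a y : E}
    (hΦ : StrongConvexOn s m Φ) (ha : a ∈ s) (hmin : IsMinOn Φ s a) (hy : y ∈ s) :
    Φ a + m / 2 * ‖y - a‖ ^ 2 ≤ Φ y := by
  have key : ∀ θ ∈ Set.Ioo (0 : ℝ) 1, Φ a + (1 - θ) * (m / 2 * ‖y - a‖ ^ 2) ≤ Φ y := by
    rintro θ ⟨hθ0, hθ1⟩
    have hconv := hΦ.2 hy ha hθ0.le (sub_nonneg.2 hθ1.le) (add_sub_cancel θ 1)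
    have hle :=
      isMinOn_iff.1 hmin _ (hΦ.1 hy ha hθ0.le (sub_nonneg.2 hθ1.le) (add_sub_cancel θ 1))
    rw [smul_eq_mul, smul_eq_mul] at hconv
    -- `hle` and `hconv` combine to `θ * (lhs) ≤ θ * Φ y`; cancel `θ > 0`
    nlinarith
  have hlim : Tendsto (fun θ : ℝ => Φ a + (1 - θ) * (m / 2 * ‖y - a‖ ^ 2)) (𝓝[>] 0)
      (𝓝 (Φ a + m / 2 * ‖y - a‖ ^ 2)) := by
    refine Tendsto.mono_left ?_ nhdsWithin_le_nhds
    have hcont : Continuous fun θ : ℝ => Φ a + (1 - θ) * (m / 2 * ‖y - a‖ ^ 2) := by fun_prop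
    convert hcont.tendsto 0 using 2
    ring
  exact le_of_tendsto hlim (eventually_of_mem (Ioo_mem_nhdsGT one_pos) key)

theorem real_inner_le_mul_sq_add (u v : E) {ε : ℝ} (hε : 0 < ε) :
    ⟪u, v⟫ ≤ ε * ‖u‖ ^ 2 + 1 / (4 * ε) * ‖v‖ ^ 2 := by
  have h4ε : 0 < 4 * ε := by positivity
  have hamgm : 4 * ε * (‖u‖ * ‖v‖) ≤ 4 * ε * (ε * ‖u‖ ^ 2 + 1 / (4 * ε) * ‖v‖ ^ 2) := by
    rw [mul_add, ← mul_assoc (4 * ε) (1 / (4 * ε)), mul_one_div_cancel h4ε.ne', one_mul]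
    nlinarith [sq_nonneg (2 * ε * ‖u‖ - ‖v‖)]
  exact (real_inner_le_norm u v).trans (le_of_mul_le_mul_left hamgm h4ε)

end InnerProduct

section LipschitzGradient

variable {E : Type*} [NormedAddCommGroup E] [InnerProductSpace ℝ E] [CompleteSpace E]
  {f : E → ℝ}

theorem DifferentiableAt.hasDerivAt_comp_add_smul {a δ : E} {τ : ℝ}
    (hf : DifferentiableAt ℝ f (a + τ • δ)) :
    HasDerivAt (fun σ : ℝ => f (a + σ • δ)) ⟪gradient f (a + τ • δ), δ⟫ τ := by
  have hline : HasDerivAt (fun σ : ℝ => a + σ • δ) δ τ := by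
    simpa using ((hasDerivAt_id τ).smul_const δ).const_add a
  simpa [Function.comp_def] using hf.hasGradientAt.hasFDerivAt.comp_hasDerivAt τ hline

theorem le_add_inner_gradient_add_sq_norm_sub (hf : Differentiable ℝ f) {L : ℝ}
    (hLip : ∀ x y, ‖gradient f x - gradient f y‖ ≤ L * ‖x - y‖) (a b : E) :
    f b ≤ f a + ⟪gradient f a, b - a⟫ + L / 2 * ‖b - a‖ ^ 2 := by
  set δ := b - a
  let F : ℝ → ℝ := fun τ => L / 2 * τ ^ 2 * ‖δ‖ ^ 2 + τ * ⟪gradient f a, δ⟫ - f (a + τ • δ)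
  have hF : ∀ τ, HasDerivAt F (L * τ * ‖δ‖ ^ 2 + ⟪gradient f a, δ⟫
      - ⟪gradient f (a + τ • δ), δ⟫) τ := fun τ => by
    have hquad := ((hasDerivAt_pow 2 τ).const_mul (L / 2)).mul_const (‖δ‖ ^ 2)
    have hlin := (hasDerivAt_id τ).mul_const ⟪gradient f a, δ⟫
    exact ((hquad.add hlin).sub (hf (a + τ • δ)).hasDerivAt_comp_add_smul).congr_deriv
      (by push_cast; ring)
  have hF' : ∀ τ ∈ interior (Set.Icc (0 : ℝ) 1), 0 ≤ L * τ * ‖δ‖ ^ 2 + ⟪gradient f a, δ⟫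
      - ⟪gradient f (a + τ • δ), δ⟫ := by
    intro τ hτ
    rw [interior_Icc] at hτ
    have hcs := real_inner_le_norm (gradient f (a + τ • δ) - gradient f a) δ
    have hlip := hLip (a + τ • δ) a
    rw [add_sub_cancel_left, norm_smul, Real.norm_of_nonneg hτ.1.le] at hlip
    rw [inner_sub_left] at hcs
    nlinarith [mul_le_mul_of_nonneg_right hlip (norm_nonneg δ)]
  have hmono : MonotoneOn F (Set.Icc 0 1) :=
    monotoneOn_of_hasDerivWithinAt_nonneg (convex_Icc 0 1)
      (continuous_iff_continuousAt.2 fun τ => (hF τ).continuousAt).continuousOn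
      (fun τ _ => (hF τ).hasDerivWithinAt) hF'
  have h01 := hmono (Set.left_mem_Icc.2 zero_le_one) (Set.right_mem_Icc.2 zero_le_one) zero_le_one
  simp only [F, zero_smul, add_zero, one_smul, add_sub_cancel, δ] at h01
  linarith

theorem sub_sub_inner_le_of_lipschitz_gradient (hf : Differentiable ℝ f) {L : ℝ}
    (hLip : ∀ x y, ‖gradient f x - gradient f y‖ ≤ L * ‖x - y‖) (x y v : E) {ε : ℝ}
    (hε : 0 < ε) :
    f y - f x - ⟪v, y - x⟫ ≤ ε * ‖gradient f x - v‖ ^ 2 + (L / 2 + 1 / (4 * ε)) * ‖y - x‖ ^ 2 := by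
  have hdesc := le_add_inner_gradient_add_sq_norm_sub hf hLip x y
  have hyoung := real_inner_le_mul_sq_add (gradient f x - v) (y - x) hε
  rw [inner_sub_left] at hyoung
  linarith

theorem one_sub_mul_sub_sub_inner_le (hf : Differentiable ℝ f) {L : ℝ} (hL : 0 ≤ L)
    (hLip : ∀ x y, ‖gradient f x - gradient f y‖ ≤ L * ‖x - y‖) {lam I α : ℝ} (hlam : 0 < lam)
    (hI : 0 < I) (hα : α < 1) (hαbound : (I / 2 + lam * L) / (1 + I / 2 + lam * L) ≤ α)
    (x y v : E) :
    (1 - α) * (f y - f x - ⟪v, y - x⟫)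
      ≤ α / (2 * lam) * ‖y - x‖ ^ 2 + (1 - α) * (lam / I * ‖gradient f x - v‖ ^ 2) := by
  have hlin := sub_sub_inner_le_of_lipschitz_gradient hf hLip x y v (div_pos hlam hI)
  have hcoef : (1 - α) * (L / 2 + 1 / (4 * (lam / I))) ≤ α / (2 * lam) := by
    rw [div_le_iff₀ (by positivity)] at hαbound
    rw [show (1 - α) * (L / 2 + 1 / (4 * (lam / I))) = (1 - α) * (I / 2 + lam * L) / (2 * lam) by
      field_simp; ring]
    gcongr
    linarith
  calc (1 - α) * (f y - f x - ⟪v, y - x⟫)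
      ≤ (1 - α) * (lam / I * ‖gradient f x - v‖ ^ 2
          + (L / 2 + 1 / (4 * (lam / I))) * ‖y - x‖ ^ 2) :=
        mul_le_mul_of_nonneg_left hlin (sub_nonneg.2 hα.le)
    _ = (1 - α) * (L / 2 + 1 / (4 * (lam / I))) * ‖y - x‖ ^ 2
          + (1 - α) * (lam / I * ‖gradient f x - v‖ ^ 2) := by ring
    _ ≤ α / (2 * lam) * ‖y - x‖ ^ 2 + (1 - α) * (lam / I * ‖gradient f x - v‖ ^ 2) := by gcongr

end LipschitzGradient

theorem le_pow_mul_add_sum_of_le_mul_add {α : ℝ} (hα : 0 ≤ α) {t b : ℕ → ℝ}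
    (h : ∀ n, 1 ≤ n → t (n + 1) ≤ α * t n + b n) (m : ℕ) :
    t (m + 1) ≤ α ^ m * t 1 + ∑ j ∈ Finset.Icc 1 m, α ^ (m - j) * b j := by
  induction m with
  | zero => simp
  | succ m ih =>
    have hsum : α * ∑ j ∈ Finset.Icc 1 m, α ^ (m - j) * b j
        = ∑ j ∈ Finset.Icc 1 m, α ^ (m + 1 - j) * b j := by
      rw [Finset.mul_sum]
      refine Finset.sum_congr rfl fun j hj => ?_
      rw [Nat.sub_add_comm (Finset.mem_Icc.1 hj).2, pow_succ]
      ring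
    calc t (m + 1 + 1) ≤ α * t (m + 1) + b (m + 1) := h _ (Nat.le_add_left 1 m)
      _ ≤ α * (α ^ m * t 1 + ∑ j ∈ Finset.Icc 1 m, α ^ (m - j) * b j) + b (m + 1) := by
        gcongr
      _ = α ^ (m + 1) * t 1 + ∑ j ∈ Finset.Icc 1 (m + 1), α ^ (m + 1 - j) * b j := by
        rw [Finset.sum_Icc_succ_top (Nat.le_add_left 1 m), mul_add, hsum, pow_succ]
        simp only [tsub_self, pow_zero, one_mul]
        ring

theorem stmt_8_general {d : ℕ} (f : EuclideanSpace ℝ (Fin d) → ℝ) (hf : Differentiable ℝ f)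
    (L : ℝ) (hL : 0 < L)
    (hLip : ∀ x y, ‖gradient f x - gradient f y‖ ≤ L * ‖x - y‖)
    (s : Set (EuclideanSpace ℝ (Fin d)))
    (h : EuclideanSpace ℝ (Fin d) → ℝ) (hconv : ConvexOn ℝ s h)
    (lam : ℝ) (hlam : 0 < lam) (I : ℕ) (hI : 1 ≤ I)
    (α : ℝ) (hα : α ∈ Set.Ioo (0 : ℝ) 1)
    (x0 : EuclideanSpace ℝ (Fin d))
    (c0 : ℝ) (svec : ℕ → EuclideanSpace ℝ (Fin d))
    (x : ℕ → EuclideanSpace ℝ (Fin d))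
    (𝓛 : ℕ → EuclideanSpace ℝ (Fin d) → ℝ)
    (h𝓛1 : ∀ y, 𝓛 1 y = c0 + ⟪svec 0, y - x0⟫ + h y)
    (h𝓛rec : ∀ i, 2 ≤ i → ∀ y,
      𝓛 i y = α * 𝓛 (i - 1) y + (1 - α) * (f (x (i - 1)) + ⟪svec (i - 1), y - x (i - 1)⟫ + h y))
    -- `x_i` is the minimizer of `𝓛_i^λ` over `ℝ^d` (i.e. over `dom h`):
    (hxmem : ∀ i, 1 ≤ i → x i ∈ s)
    (hxmin : ∀ i, 1 ≤ i → ∀ y ∈ s,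
      𝓛 i (x i) + 1 / (2 * lam) * ‖x i - x0‖ ^ 2 ≤ 𝓛 i y + 1 / (2 * lam) * ‖y - x0‖ ^ 2)
    (u : ℕ → ℝ)
    (hurec : ∀ i, 2 ≤ i →
      u i = α * u (i - 1) + (1 - α) * (f (x i) + h (x i) + 1 / (2 * lam) * ‖x i - x0‖ ^ 2))
    (t r : ℕ → ℝ)
    (ht : ∀ i, t i = u i - (𝓛 i (x i) + 1 / (2 * lam) * ‖x i - x0‖ ^ 2))
    (hr : ∀ i, r i = lam / I * ‖gradient f (x i) - svec i‖ ^ 2)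
    (hαbound : ((I : ℝ) / 2 + lam * L) / (1 + (I : ℝ) / 2 + lam * L) ≤ α) :
    ∀ i, 2 ≤ i →
      t i ≤ α * t (i - 1) + (1 - α) * r (i - 1) ∧
      t i ≤ α ^ (i - 1) * t 1 + (1 - α) * ∑ j ∈ Finset.Icc 1 (i - 1), α ^ (i - j - 1) * r j := by
  obtain ⟨hα0, hα1⟩ := hα
  have h𝓛conv : ∀ i, 1 ≤ i → ConvexOn ℝ s (𝓛 i) := by
    intro i hi
    induction i, hi using Nat.le_induction with
    | base => simpa only [← h𝓛1] using hconv.affine_add c0 (svec 0) x0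
    | succ n _ ih =>
      rw [show 𝓛 (n + 1) = _ from funext (h𝓛rec (n + 1) (by omega))]
      exact (ih.smul hα0.le).add ((hconv.affine_add _ _ _).smul (sub_nonneg.2 hα1.le))
  have hstep : ∀ p, 1 ≤ p → t (p + 1) ≤ α * t p + (1 - α) * r p := by
    intro p hp
    have hgain := ((h𝓛conv p hp).strongConvexOn_add_sq_norm_sub (1 / (2 * lam)) x0
      ).add_sq_norm_sub_le_of_isMinOn (hxmem p hp) (isMinOn_iff.2 (hxmin p hp))
      (hxmem (p + 1) (by omega))
    have hlin := one_sub_mul_sub_sub_inner_le hf hL.le hLip hlam (by exact_mod_cast hI) hα1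
      hαbound (x p) (x (p + 1)) (svec p)
    rw [ht, ht, hurec _ (by omega), h𝓛rec _ (by omega), hr, Nat.add_sub_cancel]
    linear_combination α * hgain + hlin
  intro i hi
  obtain ⟨m, rfl⟩ : ∃ m, i = m + 1 := ⟨i - 1, by omega⟩
  refine ⟨hstep m (by omega), ?_⟩
  calc t (m + 1) ≤ α ^ m * t 1 + ∑ j ∈ Finset.Icc 1 m, α ^ (m - j) * ((1 - α) * r j) :=
        le_pow_mul_add_sum_of_le_mul_add hα0.le hstep m
    _ = _ := by
      rw [Nat.add_sub_cancel, Finset.mul_sum]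
      congr 1
      refine Finset.sum_congr rfl fun j _ => ?_
      rw [show m + 1 - j - 1 = m - j by omega]
      ring

/-- In the setting of the proximal subproblem solver:
`f` differentiable with `L`-Lipschitz gradient, `h` proper closed convex with domain `s`,
`𝓛_1(x) = c_0 + ⟨s_0, x - x_0⟩ + h(x)`,
`𝓛_i = α 𝓛_{i-1} + (1-α) ℓ(·; x_{i-1}, s_{i-1})` for `i ≥ 2`,
`x_i` the minimizer of `𝓛_i^λ = 𝓛_i + (1/(2λ))‖· - x_0‖²`,
`u_i = α u_{i-1} + (1-α)[φ(x_i) + (1/(2λ))‖x_i - x_0‖²]` for `i ≥ 2`,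
`t_i = u_i - 𝓛_i^λ(x_i)` and `r_i = (λ/I)‖∇f(x_i) - s_i‖²`.
If `α ≥ (I/2 + λL)/(1 + I/2 + λL)`, then for every `i ≥ 2` one has
`t_i ≤ α t_{i-1} + (1-α) r_{i-1}` and consequently
`t_i ≤ α^{i-1} t_1 + (1-α) Σ_{j=1}^{i-1} α^{i-j-1} r_j`. -/
theorem stmt_8 {d : ℕ} (f : EuclideanSpace ℝ (Fin d) → ℝ) (hf : Differentiable ℝ f)
    (L : ℝ) (hL : 0 < L)
    (hLip : ∀ x y, ‖gradient f x - gradient f y‖ ≤ L * ‖x - y‖)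
    (s : Set (EuclideanSpace ℝ (Fin d))) (hs : s.Nonempty) (hcl : IsClosed s)
    (h : EuclideanSpace ℝ (Fin d) → ℝ) (hconv : ConvexOn ℝ s h)
    (hlsc : LowerSemicontinuousOn h s)
    (lam : ℝ) (hlam : 0 < lam) (I : ℕ) (hI : 1 ≤ I)
    (α : ℝ) (hα : α ∈ Set.Ioo (0 : ℝ) 1)
    (x0 : EuclideanSpace ℝ (Fin d)) (hx0 : x0 ∈ s)
    (c0 u1 : ℝ) (svec : ℕ → EuclideanSpace ℝ (Fin d))
    (x : ℕ → EuclideanSpace ℝ (Fin d))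
    (𝓛 : ℕ → EuclideanSpace ℝ (Fin d) → ℝ)
    (h𝓛1 : ∀ y, 𝓛 1 y = c0 + ⟪svec 0, y - x0⟫ + h y)
    (h𝓛rec : ∀ i, 2 ≤ i → ∀ y,
      𝓛 i y = α * 𝓛 (i - 1) y + (1 - α) * (f (x (i - 1)) + ⟪svec (i - 1), y - x (i - 1)⟫ + h y))
    -- `x_i` is the minimizer of `𝓛_i^λ` over `ℝ^d` (i.e. over `dom h`):
    (hxmem : ∀ i, 1 ≤ i → x i ∈ s)
    (hxmin : ∀ i, 1 ≤ i → ∀ y ∈ s,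
      𝓛 i (x i) + 1 / (2 * lam) * ‖x i - x0‖ ^ 2 ≤ 𝓛 i y + 1 / (2 * lam) * ‖y - x0‖ ^ 2)
    (u : ℕ → ℝ) (hu1 : u 1 = u1)
    (hurec : ∀ i, 2 ≤ i →
      u i = α * u (i - 1) + (1 - α) * (f (x i) + h (x i) + 1 / (2 * lam) * ‖x i - x0‖ ^ 2))
    (t r : ℕ → ℝ)
    (ht : ∀ i, t i = u i - (𝓛 i (x i) + 1 / (2 * lam) * ‖x i - x0‖ ^ 2))
    (hr : ∀ i, r i = lam / I * ‖gradient f (x i) - svec i‖ ^ 2)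
    (hαbound : ((I : ℝ) / 2 + lam * L) / (1 + (I : ℝ) / 2 + lam * L) ≤ α) :
    ∀ i, 2 ≤ i →
      t i ≤ α * t (i - 1) + (1 - α) * r (i - 1) ∧
      t i ≤ α ^ (i - 1) * t 1 + (1 - α) * ∑ j ∈ Finset.Icc 1 (i - 1), α ^ (i - j - 1) * r j :=
  stmt_8_general f hf L hL hLip s h hconv lam hlam I hI α hα x0 c0 svec x 𝓛 h𝓛1 h𝓛rec hxmem hxmin u
    hurec t r ht hr hαbound
end

section
/- Set u_1 := c_1 + (1/(2λ))‖x_1 − x_0‖² and t_1 := u_1 − 𝓛_1^λ(x_1). Then t_1 ≤ (c_1 − φ(x_1)) − (c_0 − f(x_0)) + ‖∇f(x_0) − s_0‖·‖x_1 − x_0‖ + (L/2)‖x_1 − x_0‖². -/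
/-!
Once `u₁` and `t₁` are unfolded, the proximal terms and `h x₁` cancel and the claim reduces to
`f x₁ - f x₀ - ⟪s₀, x₁ - x₀⟫ ≤ ‖∇f x₀ - s₀‖ ‖x₁ - x₀‖ + (L/2) ‖x₁ - x₀‖²`. This is the descent
lemma `f x₁ ≤ f x₀ + ⟪∇f x₀, x₁ - x₀⟫ + (L/2) ‖x₁ - x₀‖²` plus Cauchy–Schwarz for
`⟪∇f x₀ - s₀, x₁ - x₀⟫`. The descent lemma follows by comparing `t ↦ f (x₀ + t • (x₁ - x₀))` on
`[0, 1]` with the parabola through `f x₀` whose slope dominates it by the Lipschitz bound on `∇f`.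
-/

open scoped RealInnerProductSpace

section Descent

variable {F : Type*} [NormedAddCommGroup F] [InnerProductSpace ℝ F] [CompleteSpace F]
  {f : F → ℝ}

theorem HasGradientAt.hasDerivAt_comp_add_smul {g x v : F} {t : ℝ}
    (hf : HasGradientAt f g (x + t • v)) :
    HasDerivAt (fun t : ℝ => f (x + t • v)) ⟪g, v⟫ t := by
  have hline : HasDerivAt (fun t : ℝ => x + t • v) v t := by
    simpa using ((hasDerivAt_id t).smul_const v).const_add x
  have := hf.hasFDerivAt.comp_hasDerivAt t hline
  rwa [InnerProductSpace.toDual_apply_apply] at this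

theorem Differentiable.image_le_of_lipschitz_gradient (hf : Differentiable ℝ f) {L : ℝ}
    (hLip : ∀ x y, ‖gradient f x - gradient f y‖ ≤ L * ‖x - y‖) (x y : F) :
    f y ≤ f x + ⟪gradient f x, y - x⟫ + L / 2 * ‖y - x‖ ^ 2 := by
  set v := y - x
  have hderiv (t : ℝ) :
      HasDerivAt (fun t : ℝ => f (x + t • v)) ⟪gradient f (x + t • v), v⟫ t :=
    (hf _).hasGradientAt.hasDerivAt_comp_add_smul
  have hparabola (t : ℝ) :
      HasDerivAt (fun t : ℝ => f x + t * ⟪gradient f x, v⟫ + L / 2 * t ^ 2 * ‖v‖ ^ 2)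
        (⟪gradient f x, v⟫ + L * t * ‖v‖ ^ 2) t := by
    refine ((((hasDerivAt_id t).mul_const _).const_add (f x)).add
      (((hasDerivAt_pow 2 t).const_mul (L / 2)).mul_const _)).congr_deriv ?_
    simp only [Nat.cast_ofNat]; ring
  have hslope {t : ℝ} (ht : 0 ≤ t) :
      ⟪gradient f (x + t • v), v⟫ ≤ ⟪gradient f x, v⟫ + L * t * ‖v‖ ^ 2 := by
    have hgrad : ‖gradient f (x + t • v) - gradient f x‖ ≤ L * t * ‖v‖ := by
      simpa [norm_smul, abs_of_nonneg ht, mul_assoc] using hLip (x + t • v) x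
    calc ⟪gradient f (x + t • v), v⟫
        = ⟪gradient f x, v⟫ + ⟪gradient f (x + t • v) - gradient f x, v⟫ := by
          rw [inner_sub_left]; ring
      _ ≤ ⟪gradient f x, v⟫ + ‖gradient f (x + t • v) - gradient f x‖ * ‖v‖ := by
          gcongr; exact real_inner_le_norm _ _
      _ ≤ ⟪gradient f x, v⟫ + L * t * ‖v‖ * ‖v‖ := by gcongr
      _ = ⟪gradient f x, v⟫ + L * t * ‖v‖ ^ 2 := by ring
  have := image_le_of_deriv_right_le_deriv_boundary (a := 0) (b := 1)
    (fun t _ => (hderiv t).continuousAt.continuousWithinAt)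
    (fun t _ => (hderiv t).hasDerivWithinAt) (by simp)
    (fun t _ => (hparabola t).continuousAt.continuousWithinAt)
    (fun t _ => (hparabola t).hasDerivWithinAt) (fun t ht => hslope ht.1)
    (Set.right_mem_Icc.2 zero_le_one)
  simpa [v] using this

end Descent

theorem stmt_9_general {d : ℕ} (f : EuclideanSpace ℝ (Fin d) → ℝ) (hf : Differentiable ℝ f)
    (L : ℝ)
    (hLip : ∀ x y, ‖gradient f x - gradient f y‖ ≤ L * ‖x - y‖)
    (h : EuclideanSpace ℝ (Fin d) → ℝ)
    (lam : ℝ)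
    (x0 : EuclideanSpace ℝ (Fin d))
    (c0 c1 : ℝ) (s0 : EuclideanSpace ℝ (Fin d))
    (x1 : EuclideanSpace ℝ (Fin d))
    (u1 t1 : ℝ)
    (hu1 : u1 = c1 + 1 / (2 * lam) * ‖x1 - x0‖ ^ 2)
    (ht1 : t1 = u1 - (c0 + ⟪s0, x1 - x0⟫ + h x1 + 1 / (2 * lam) * ‖x1 - x0‖ ^ 2)) :
    t1 ≤ (c1 - (f x1 + h x1)) - (c0 - f x0) +
      ‖gradient f x0 - s0‖ * ‖x1 - x0‖ + L / 2 * ‖x1 - x0‖ ^ 2 := by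
  have hdescent := hf.image_le_of_lipschitz_gradient hLip x0 x1
  have hcs : ⟪gradient f x0 - s0, x1 - x0⟫ ≤ ‖gradient f x0 - s0‖ * ‖x1 - x0‖ :=
    real_inner_le_norm _ _
  rw [inner_sub_left] at hcs
  subst hu1 ht1
  linarith

/-- With `𝓛_1(x) = c_0 + ⟨s_0, x - x_0⟩ + h(x)`,
`x_1` the minimizer of `𝓛_1^λ = 𝓛_1 + (1/(2λ))‖· - x_0‖²`,
`u_1 = c_1 + (1/(2λ))‖x_1 - x_0‖²` and `t_1 = u_1 - 𝓛_1^λ(x_1)`, one has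
`t_1 ≤ (c_1 - φ(x_1)) - (c_0 - f(x_0)) + ‖∇f(x_0) - s_0‖‖x_1 - x_0‖ + (L/2)‖x_1 - x_0‖²`. -/
theorem stmt_9 {d : ℕ} (f : EuclideanSpace ℝ (Fin d) → ℝ) (hf : Differentiable ℝ f)
    (L : ℝ) (hL : 0 < L)
    (hLip : ∀ x y, ‖gradient f x - gradient f y‖ ≤ L * ‖x - y‖)
    (s : Set (EuclideanSpace ℝ (Fin d))) (hs : s.Nonempty) (hcl : IsClosed s)
    (h : EuclideanSpace ℝ (Fin d) → ℝ) (hconv : ConvexOn ℝ s h)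
    (hlsc : LowerSemicontinuousOn h s)
    (lam : ℝ) (hlam : 0 < lam)
    (x0 : EuclideanSpace ℝ (Fin d)) (hx0 : x0 ∈ s)
    (c0 c1 : ℝ) (s0 : EuclideanSpace ℝ (Fin d))
    (x1 : EuclideanSpace ℝ (Fin d)) (hx1mem : x1 ∈ s)
    -- `x_1` minimizes `𝓛_1^λ`:
    (hx1min : ∀ y ∈ s,
      c0 + ⟪s0, x1 - x0⟫ + h x1 + 1 / (2 * lam) * ‖x1 - x0‖ ^ 2 ≤
        c0 + ⟪s0, y - x0⟫ + h y + 1 / (2 * lam) * ‖y - x0‖ ^ 2)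
    (u1 t1 : ℝ)
    (hu1 : u1 = c1 + 1 / (2 * lam) * ‖x1 - x0‖ ^ 2)
    (ht1 : t1 = u1 - (c0 + ⟪s0, x1 - x0⟫ + h x1 + 1 / (2 * lam) * ‖x1 - x0‖ ^ 2)) :
    t1 ≤ (c1 - (f x1 + h x1)) - (c0 - f x0) +
      ‖gradient f x0 - s0‖ * ‖x1 - x0‖ + L / 2 * ‖x1 - x0‖ ^ 2 :=
  stmt_9_general f hf L hLip h lam x0 c0 c1 s0 x1 u1 t1 hu1 ht1
end

section
/- Assume (i) for every x ∈ dom h, φ(x) ≥ E[φ(w) + ⟨v, x − w⟩ − η], and (ii) E[φ(w) + (1/(2λ))‖w − z̄‖² − G − (1/(2λ))‖z − z̄‖²] ≤ ε. Then for every x ∈ dom h, E[ φ(w) + (1/(2λ))‖w − z̄‖² − φ(x) − (1/(2λ))‖x − z̄‖² + ((1+λμ)/(λ(2+λμ)))‖x − z‖² ] ≤ 2ε. -/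
open MeasureTheory
open scoped RealInnerProductSpace

/-! Put `Φ := φ + ‖· - z̄‖² / (2λ)`, which is `(μ + 1/λ)`-strongly convex on `dom h`, and
`m := E[G + ‖z - z̄‖² / (2λ)]`. Expanding `⟨v, y - z⟩` by the three-point identity, (i) says that
the quadratic model `y ↦ m + E‖y - z‖² / (2λ)` lies below `Φ` on `dom h`, and (ii) says
`E Φ(w) ≤ m + ε`. Evaluating the model at the midpoint of `x` and `w`, strong convexity of `Φ`
together with `αβ/(α+β) ‖u‖² ≤ α ‖u - v‖² + β ‖v‖²` (for `α = 1/λ`, `β = μ + 1/λ`) gives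
`m + c E‖x - z‖² ≤ Φ(x) + ε` with `c = αβ/(α+β) = (1+λμ)/(λ(2+λμ))`; adding (ii) gives the bound. -/

section StrongConvexity

variable {E : Type*} [NormedAddCommGroup E] [NormedSpace ℝ E] {s t : Set E} {m n : ℝ}
  {f g : E → ℝ}

lemma StrongConvexOn.add (hf : StrongConvexOn s m f) (hg : StrongConvexOn s n g) :
    StrongConvexOn s (m + n) (f + g) := by
  unfold StrongConvexOn
  convert UniformConvexOn.add hf hg using 2
  simp only [Pi.add_apply]
  ring

lemma StrongConvexOn.add_convexOn (hf : StrongConvexOn s m f) (hg : ConvexOn ℝ s g) :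
    StrongConvexOn s m (f + g) := by
  simpa using hf.add (strongConvexOn_zero.2 hg)

lemma StrongConvexOn.subset (hf : StrongConvexOn t m f) (hst : s ⊆ t) (hs : Convex ℝ s) :
    StrongConvexOn s m f :=
  ⟨hs, fun _ hx _ hy => hf.2 (hst hx) (hst hy)⟩

lemma StrongConvexOn.midpoint_le (hf : StrongConvexOn s m f) {x y : E} (hx : x ∈ s)
    (hy : y ∈ s) :
    f ((1 / 2 : ℝ) • x + (1 / 2 : ℝ) • y) ≤ (f x + f y) / 2 - m / 8 * ‖x - y‖ ^ 2 := by
  have := hf.2 hx hy (by norm_num : (0 : ℝ) ≤ 1 / 2) (by norm_num : (0 : ℝ) ≤ 1 / 2) (by norm_num)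
  simp only [smul_eq_mul] at this
  linarith

lemma strongConvexOn_mul_norm_sub_sq {E : Type*} [NormedAddCommGroup E] [InnerProductSpace ℝ E]
    {s : Set E} (hs : Convex ℝ s) (m : ℝ) (a : E) :
    StrongConvexOn s m fun y => m / 2 * ‖y - a‖ ^ 2 := by
  rw [strongConvexOn_iff_convex]
  have affine : (fun y => m / 2 * ‖y - a‖ ^ 2 - m / 2 * ‖y‖ ^ 2)
      = fun y => ((-m) • innerₛₗ ℝ a) y + m / 2 * ‖a‖ ^ 2 := by
    funext y
    rw [norm_sub_sq_real, LinearMap.smul_apply, innerₛₗ_apply_apply, real_inner_comm, smul_eq_mul]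
    ring
  rw [affine]
  exact (((-m) • innerₛₗ ℝ a).convexOn hs).add_const _

end StrongConvexity

lemma mul_div_add_mul_norm_sq_le {F : Type*} [SeminormedAddCommGroup F] {α β : ℝ}
    (hα : 0 ≤ α) (hβ : 0 ≤ β) (u v : F) :
    α * β / (α + β) * ‖u‖ ^ 2 ≤ α * ‖u - v‖ ^ 2 + β * ‖v‖ ^ 2 := by
  have triangle : ‖u‖ ≤ ‖u - v‖ + ‖v‖ := by
    simpa using norm_add_le (u - v) v
  rcases (add_nonneg hα hβ).eq_or_lt with hsum | hsum
  · rw [← hsum, div_zero, zero_mul]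
    positivity
  rw [div_mul_eq_mul_div, div_le_iff₀ hsum]
  have hsq : ‖u‖ ^ 2 ≤ (‖u - v‖ + ‖v‖) ^ 2 := by gcongr
  nlinarith [sq_nonneg (α * ‖u - v‖ - β * ‖v‖), mul_le_mul_of_nonneg_left hsq (mul_nonneg hα hβ)]

lemma two_mul_inner_sub_sub {E : Type*} [NormedAddCommGroup E] [InnerProductSpace ℝ E] (a b c : E) :
    2 * ⟪a - b, c - b⟫ = ‖c - b‖ ^ 2 + ‖b - a‖ ^ 2 - ‖c - a‖ ^ 2 := by
  have := norm_sub_sq_real (c - b) (a - b)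
  rw [sub_sub_sub_cancel_right, real_inner_comm, norm_sub_rev a b] at this
  linarith

lemma integrable_norm_sub_sq_of_ae_mem {Ω E : Type*} [MeasurableSpace Ω] {P : Measure Ω}
    [IsFiniteMeasure P] [SeminormedAddCommGroup E] {s : Set E} (hs : Bornology.IsBounded s) {z : Ω → E}
    (hz : AEStronglyMeasurable z P) (hzs : ∀ᵐ ω ∂P, z ω ∈ s) (y : E) :
    Integrable (fun ω => ‖z ω - y‖ ^ 2) P := by
  obtain ⟨C, hC⟩ := hs.exists_norm_le
  refine .of_bound (((continuous_id.sub continuous_const).norm.pow 2).comp_aestronglyMeasurable hz)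
    ((C + ‖y‖) ^ 2) ?_
  filter_upwards [hzs] with ω hω
  rw [Real.norm_eq_abs, abs_of_nonneg (by positivity)]
  gcongr
  exact (norm_sub_le _ _).trans (by linarith [hC _ hω])

section Expectation

variable {Ω E : Type*} [MeasurableSpace Ω] {P : Measure Ω} [IsProbabilityMeasure P]
  [NormedAddCommGroup E] [InnerProductSpace ℝ E] {s : Set E}

theorem add_mul_integral_norm_sub_sq_le {Φ : E → ℝ} {α β m ε : ℝ} (hα : 0 ≤ α) (hβ : 0 ≤ β)
    (hΦ : StrongConvexOn s β Φ) {w z : Ω → E} (hws : ∀ᵐ ω ∂P, w ω ∈ s)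
    (hz : ∀ y, Integrable (fun ω => ‖y - z ω‖ ^ 2) P) (hΦw : Integrable (fun ω => Φ (w ω)) P)
    (hmodel : ∀ y ∈ s, m + α / 2 * ∫ ω, ‖y - z ω‖ ^ 2 ∂P ≤ Φ y)
    (hgap : ∫ ω, Φ (w ω) ∂P ≤ m + ε) {x : E} (hx : x ∈ s) :
    m + α * β / (α + β) * ∫ ω, ‖x - z ω‖ ^ 2 ∂P ≤ Φ x + ε := by
  set c := α * β / (α + β)
  set J := ∫ ω, ‖x - z ω‖ ^ 2 ∂P
  have hpointwise : ∀ᵐ ω ∂P, 2 * m + c * J - Φ x ≤ Φ (w ω) := by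
    filter_upwards [hws] with ω hω
    set p := (1 / 2 : ℝ) • x + (1 / 2 : ℝ) • w ω
    have hp : p ∈ s := hΦ.1 hx hω (by norm_num) (by norm_num) (by norm_num)
    have hsplit : c * J ≤ α * ∫ ω', ‖p - z ω'‖ ^ 2 ∂P + β / 4 * ‖x - w ω‖ ^ 2 := by
      calc c * J = ∫ ω', c * ‖x - z ω'‖ ^ 2 ∂P := (integral_const_mul _ _).symm
        _ ≤ ∫ ω', (α * ‖p - z ω'‖ ^ 2 + β / 4 * ‖x - w ω‖ ^ 2) ∂P := by
          refine integral_mono ((hz x).const_mul c)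
            (((hz p).const_mul α).add (integrable_const _)) fun ω' => ?_
          have hω' := mul_div_add_mul_norm_sq_le hα hβ (x - z ω') ((1 / 2 : ℝ) • (x - w ω))
          rw [show x - z ω' - (1 / 2 : ℝ) • (x - w ω) = p - z ω' by module, norm_smul,
            Real.norm_of_nonneg (by norm_num)] at hω'
          linarith
        _ = α * ∫ ω', ‖p - z ω'‖ ^ 2 ∂P + β / 4 * ‖x - w ω‖ ^ 2 := by
          rw [integral_add ((hz p).const_mul α) (integrable_const _), integral_const_mul,
            integral_const, probReal_univ, one_smul]
    linarith [hmodel p hp, hΦ.midpoint_le hx hω]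
  have hmean := integral_mono_ae (integrable_const _) hΦw hpointwise
  rw [integral_const, probReal_univ, one_smul] at hmean
  linarith

theorem integral_sub_add_mul_norm_sub_sq_le {Φ : E → ℝ} {α β m ε : ℝ} (hα : 0 ≤ α)
    (hβ : 0 ≤ β) (hΦ : StrongConvexOn s β Φ) {w z : Ω → E} (hws : ∀ᵐ ω ∂P, w ω ∈ s)
    (hz : ∀ y, Integrable (fun ω => ‖y - z ω‖ ^ 2) P) (hΦw : Integrable (fun ω => Φ (w ω)) P)
    (hmodel : ∀ y ∈ s, m + α / 2 * ∫ ω, ‖y - z ω‖ ^ 2 ∂P ≤ Φ y)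
    (hgap : ∫ ω, Φ (w ω) ∂P ≤ m + ε) {x : E} (hx : x ∈ s) :
    ∫ ω, (Φ (w ω) - Φ x + α * β / (α + β) * ‖x - z ω‖ ^ 2) ∂P ≤ 2 * ε := by
  have key := add_mul_integral_norm_sub_sq_le hα hβ hΦ hws hz hΦw hmodel hgap hx
  rw [integral_add (f := fun ω => Φ (w ω) - Φ x) (hΦw.sub (integrable_const _))
    ((hz x).const_mul _), integral_sub hΦw (integrable_const _), integral_const_mul,
    integral_const, probReal_univ, one_smul]
  linarith

lemma integral_inexact_model_eq {φ : E → ℝ} {lam : ℝ} {zbar y : E} {w z : Ω → E} {G : Ω → ℝ}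
    (hG : Integrable G P) (hzbar : Integrable (fun ω => ‖z ω - zbar‖ ^ 2) P)
    (hy : Integrable (fun ω => ‖y - z ω‖ ^ 2) P) :
    ∫ ω, (φ (w ω) + ⟪lam⁻¹ • (zbar - z ω), y - w ω⟫ -
        (φ (w ω) - G ω - ⟪lam⁻¹ • (zbar - z ω), w ω - z ω⟫)) ∂P =
      ∫ ω, (G ω + lam⁻¹ / 2 * ‖z ω - zbar‖ ^ 2) ∂P + lam⁻¹ / 2 * ∫ ω, ‖y - z ω‖ ^ 2 ∂P -
        lam⁻¹ / 2 * ‖y - zbar‖ ^ 2 := by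
  have hpointwise : ∀ ω, φ (w ω) + ⟪lam⁻¹ • (zbar - z ω), y - w ω⟫ -
      (φ (w ω) - G ω - ⟪lam⁻¹ • (zbar - z ω), w ω - z ω⟫) =
        G ω + lam⁻¹ / 2 * ‖z ω - zbar‖ ^ 2 + lam⁻¹ / 2 * ‖y - z ω‖ ^ 2 -
          lam⁻¹ / 2 * ‖y - zbar‖ ^ 2 := by
    intro ω
    have hsum : ⟪lam⁻¹ • (zbar - z ω), y - w ω⟫ + ⟪lam⁻¹ • (zbar - z ω), w ω - z ω⟫ =
        lam⁻¹ * ⟪zbar - z ω, y - z ω⟫ := by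
      rw [← inner_add_right, sub_add_sub_cancel, real_inner_smul_left]
    linear_combination hsum + lam⁻¹ / 2 * two_mul_inner_sub_sub zbar (z ω) y
  have hm : Integrable (fun ω => G ω + lam⁻¹ / 2 * ‖z ω - zbar‖ ^ 2) P :=
    hG.add (hzbar.const_mul _)
  have hmy : Integrable (fun ω => G ω + lam⁻¹ / 2 * ‖z ω - zbar‖ ^ 2 +
      lam⁻¹ / 2 * ‖y - z ω‖ ^ 2) P := hm.add (hy.const_mul _)
  simp_rw [hpointwise]
  rw [integral_sub hmy (integrable_const _), integral_add hm (hy.const_mul _),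
    integral_const_mul, integral_const, probReal_univ, one_smul]

end Expectation

theorem stmt_13_general {d : ℕ} {Ω : Type*} [MeasurableSpace Ω] (P : Measure Ω)
    [IsProbabilityMeasure P]
    (f : EuclideanSpace ℝ (Fin d) → ℝ)
    (μ : ℝ) (hμ : 0 < μ)
    (hsc : ConvexOn ℝ Set.univ (fun x => f x - μ / 2 * ‖x‖ ^ 2))
    (s : Set (EuclideanSpace ℝ (Fin d)))
    (hbd : Bornology.IsBounded s)
    (h : EuclideanSpace ℝ (Fin d) → ℝ) (hconv : ConvexOn ℝ s h)
    (lam : ℝ) (hlam : 0 < lam) (zbar : EuclideanSpace ℝ (Fin d))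
    (ε : ℝ)
    (w z : Ω → EuclideanSpace ℝ (Fin d)) (G : Ω → ℝ)
    (hw_meas : AEStronglyMeasurable w P) (hz_meas : AEStronglyMeasurable z P)
    (hws : ∀ᵐ ω ∂P, w ω ∈ s) (hzs : ∀ᵐ ω ∂P, z ω ∈ s)
    (hG_int : Integrable G P)
    (hφw_int : Integrable (fun ω => f (w ω) + h (w ω)) P)
    -- (i)
    (hyp1 : ∀ x ∈ s,
      ∫ ω, ((f (w ω) + h (w ω)) + ⟪lam⁻¹ • (zbar - z ω), x - w ω⟫ -
        ((f (w ω) + h (w ω)) - G ω - ⟪lam⁻¹ • (zbar - z ω), w ω - z ω⟫)) ∂P ≤ f x + h x)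
    -- (ii)
    (hyp2 : ∫ ω, ((f (w ω) + h (w ω)) + 1 / (2 * lam) * ‖w ω - zbar‖ ^ 2 - G ω -
      1 / (2 * lam) * ‖z ω - zbar‖ ^ 2) ∂P ≤ ε) :
    ∀ x ∈ s,
      ∫ ω, ((f (w ω) + h (w ω)) + 1 / (2 * lam) * ‖w ω - zbar‖ ^ 2 - (f x + h x) -
        1 / (2 * lam) * ‖x - zbar‖ ^ 2 +
        (1 + lam * μ) / (lam * (2 + lam * μ)) * ‖x - z ω‖ ^ 2) ∂P ≤ 2 * ε := by
  intro x hx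
  have hz y : Integrable (fun ω => ‖y - z ω‖ ^ 2) P := by
    simpa only [norm_sub_rev y] using integrable_norm_sub_sq_of_ae_mem hbd hz_meas hzs y
  have hzbar := integrable_norm_sub_sq_of_ae_mem hbd hz_meas hzs zbar
  have hm : Integrable (fun ω => G ω + lam⁻¹ / 2 * ‖z ω - zbar‖ ^ 2) P :=
    hG_int.add (hzbar.const_mul _)
  set Φ := fun y => f y + h y + lam⁻¹ / 2 * ‖y - zbar‖ ^ 2
  have hΦw : Integrable (fun ω => Φ (w ω)) P :=
    hφw_int.add ((integrable_norm_sub_sq_of_ae_mem hbd hw_meas hws zbar).const_mul _)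
  have hΦ : StrongConvexOn s (μ + lam⁻¹) Φ :=
    (((strongConvexOn_iff_convex.2 hsc).subset (Set.subset_univ s) hconv.1).add_convexOn
      hconv).add (strongConvexOn_mul_norm_sub_sq hconv.1 lam⁻¹ zbar)
  simp only [show 1 / (2 * lam) = lam⁻¹ / 2 by ring] at hyp2 ⊢
  have hmodel (y) (hy : y ∈ s) :
      ∫ ω, (G ω + lam⁻¹ / 2 * ‖z ω - zbar‖ ^ 2) ∂P + lam⁻¹ / 2 * ∫ ω, ‖y - z ω‖ ^ 2 ∂P ≤ Φ y := by
    have := (integral_inexact_model_eq (φ := fun y => f y + h y) hG_int hzbar (hz y)).symm.trans_le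
      (hyp1 y hy)
    simp only [Φ]
    linarith
  have hgap : ∫ ω, Φ (w ω) ∂P ≤ ∫ ω, (G ω + lam⁻¹ / 2 * ‖z ω - zbar‖ ^ 2) ∂P + ε := by
    rw [← sub_le_iff_le_add', ← integral_sub hΦw hm]
    convert hyp2 using 3
    ring
  have hc : lam⁻¹ * (μ + lam⁻¹) / (lam⁻¹ + (μ + lam⁻¹)) =
      (1 + lam * μ) / (lam * (2 + lam * μ)) := by
    field_simp
    ring
  refine le_of_eq_of_le (integral_congr_ae (ae_of_all _ fun ω => ?_))
    (integral_sub_add_mul_norm_sub_sq_le (by positivity) (by positivity) hΦ hws hz hΦw hmodel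
      hgap hx)
  rw [hc]
  ring

/-- With `φ = f + h` (`f` differentiable and `μ`-strongly convex, `h`
proper closed convex with nonempty bounded domain `s`), random `w, z ∈ dom h` a.s.,
`v = (z̄ - z)/λ` and `η = φ(w) - G - ⟨v, w - z⟩`,
if (i) `φ(x) ≥ E[φ(w) + ⟨v, x - w⟩ - η]` for every `x ∈ dom h` and
(ii) `E[φ(w) + (1/(2λ))‖w - z̄‖² - G - (1/(2λ))‖z - z̄‖²] ≤ ε`, then for every
`x ∈ dom h`,
`E[φ(w) + (1/(2λ))‖w - z̄‖² - φ(x) - (1/(2λ))‖x - z̄‖² + ((1+λμ)/(λ(2+λμ)))‖x - z‖²] ≤ 2ε`. -/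
theorem stmt_13 {d : ℕ} {Ω : Type*} [MeasurableSpace Ω] (P : Measure Ω)
    [IsProbabilityMeasure P]
    (f : EuclideanSpace ℝ (Fin d) → ℝ) (hf : Differentiable ℝ f)
    (μ : ℝ) (hμ : 0 < μ)
    (hsc : ConvexOn ℝ Set.univ (fun x => f x - μ / 2 * ‖x‖ ^ 2))
    (s : Set (EuclideanSpace ℝ (Fin d))) (hs : s.Nonempty) (hcl : IsClosed s)
    (hbd : Bornology.IsBounded s)
    (h : EuclideanSpace ℝ (Fin d) → ℝ) (hconv : ConvexOn ℝ s h)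
    (hlsc : LowerSemicontinuousOn h s)
    (lam : ℝ) (hlam : 0 < lam) (zbar : EuclideanSpace ℝ (Fin d)) (hzbar : zbar ∈ s)
    (ε : ℝ) (hε : 0 < ε)
    (w z : Ω → EuclideanSpace ℝ (Fin d)) (G : Ω → ℝ)
    (hw_meas : AEStronglyMeasurable w P) (hz_meas : AEStronglyMeasurable z P)
    (hws : ∀ᵐ ω ∂P, w ω ∈ s) (hzs : ∀ᵐ ω ∂P, z ω ∈ s)
    (hG_int : Integrable G P)
    (hφw_int : Integrable (fun ω => f (w ω) + h (w ω)) P)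
    (hη_int : Integrable (fun ω =>
      (f (w ω) + h (w ω)) - G ω - ⟪lam⁻¹ • (zbar - z ω), w ω - z ω⟫) P)
    -- (i)
    (hyp1 : ∀ x ∈ s,
      ∫ ω, ((f (w ω) + h (w ω)) + ⟪lam⁻¹ • (zbar - z ω), x - w ω⟫ -
        ((f (w ω) + h (w ω)) - G ω - ⟪lam⁻¹ • (zbar - z ω), w ω - z ω⟫)) ∂P ≤ f x + h x)
    -- (ii)
    (hyp2 : ∫ ω, ((f (w ω) + h (w ω)) + 1 / (2 * lam) * ‖w ω - zbar‖ ^ 2 - G ω -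
      1 / (2 * lam) * ‖z ω - zbar‖ ^ 2) ∂P ≤ ε) :
    ∀ x ∈ s,
      ∫ ω, ((f (w ω) + h (w ω)) + 1 / (2 * lam) * ‖w ω - zbar‖ ^ 2 - (f x + h x) -
        1 / (2 * lam) * ‖x - zbar‖ ^ 2 +
        (1 + lam * μ) / (lam * (2 + lam * μ)) * ‖x - z ω‖ ^ 2) ∂P ≤ 2 * ε :=
  stmt_13_general P f μ hμ hsc s hbd h hconv lam hlam zbar ε w z G hw_meas hz_meas hws hzs hG_int
    hφw_int hyp1 hyp2
end

section
/- Let θ > 1, δ ≥ 0, and K ≥ 1 an integer. Suppose a_1, …, a_K are real numbers and b_0, b_1, …, b_K are nonnegative real numbers satisfying a_k ≤ b_{k−1} − θ·b_k + δ for every 1 ≤ k ≤ K. Then min_{1 ≤ k ≤ K} a_k ≤ b_0 / (Σ_{k=1}^K θ^{k−1}) + δ = (θ − 1)·b_0 / (θ^K − 1) + δ. -/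
/-- Let `θ > 1`, `δ ≥ 0`, `K ≥ 1`, reals `a_1, …, a_K` and nonnegative
reals `b_0, …, b_K` with `a_k ≤ b_{k-1} - θ b_k + δ` for `1 ≤ k ≤ K`.  Then
`min_{1 ≤ k ≤ K} a_k ≤ b_0 / (Σ_{k=1}^K θ^{k-1}) + δ = (θ-1) b_0 / (θ^K - 1) + δ`. -/
theorem stmt_16 (θ δ : ℝ) (K : ℕ) (hθ : 1 < θ) (hδ : 0 ≤ δ) (hK : 1 ≤ K)
    (a b : ℕ → ℝ) (hb : ∀ k ≤ K, 0 ≤ b k)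
    (hab : ∀ k, 1 ≤ k → k ≤ K → a k ≤ b (k - 1) - θ * b k + δ) :
    (Finset.Icc 1 K).inf' (Finset.nonempty_Icc.mpr hK) a ≤
        b 0 / (∑ k ∈ Finset.Icc 1 K, θ ^ (k - 1)) + δ ∧
      b 0 / (∑ k ∈ Finset.Icc 1 K, θ ^ (k - 1)) + δ = (θ - 1) * b 0 / (θ ^ K - 1) + δ := by
  have hθ1 : θ - 1 ≠ 0 := sub_ne_zero.mpr (ne_of_gt hθ)
  have hθK : 1 < θ ^ K := one_lt_pow₀ hθ (Nat.one_le_iff_ne_zero.mp hK)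
  -- rewrite the sum as a range sum
  have hreidx : ∑ k ∈ Finset.Icc 1 K, θ ^ (k - 1) = ∑ i ∈ Finset.range K, θ ^ i := by
    rw [show Finset.Icc 1 K = Finset.Ico 1 (K + 1) by rfl, Finset.sum_Ico_eq_sum_range]
    simp
  have hgeom : ∑ i ∈ Finset.range K, θ ^ i = (θ ^ K - 1) / (θ - 1) :=
    geom_sum_eq (ne_of_gt hθ) K
  have hS : ∑ k ∈ Finset.Icc 1 K, θ ^ (k - 1) = (θ ^ K - 1) / (θ - 1) := by
    rw [hreidx, hgeom]
  have hSpos : 0 < ∑ k ∈ Finset.Icc 1 K, θ ^ (k - 1) := by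
    rw [hS]; exact div_pos (by linarith) (by linarith)
  set m := (Finset.Icc 1 K).inf' (Finset.nonempty_Icc.mpr hK) a with hm
  have hma : ∀ k ∈ Finset.Icc 1 K, m ≤ a k := fun k hk => Finset.inf'_le a hk
  -- telescoping
  have htel : ∑ k ∈ Finset.Icc 1 K, θ ^ (k - 1) * (b (k - 1) - θ * b k) =
      b 0 - θ ^ K * b K := by
    have : ∀ k ∈ Finset.Icc 1 K, θ ^ (k - 1) * (b (k - 1) - θ * b k) =
        (fun j => θ ^ j * b j) (k - 1) - (fun j => θ ^ j * b j) k := by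
      intro k hk
      obtain ⟨hk1, hk2⟩ := Finset.mem_Icc.mp hk
      obtain ⟨j, rfl⟩ := Nat.exists_eq_add_of_le hk1
      simp only [Nat.add_sub_cancel_left, Nat.add_sub_cancel]
      rw [pow_add, pow_one]
      ring
    rw [Finset.sum_congr rfl this,
        show Finset.Icc 1 K = Finset.Ico 1 (K + 1) by rfl, Finset.sum_Ico_eq_sum_range]
    simp only [Nat.add_sub_cancel, Nat.add_sub_cancel_left]
    have := Finset.sum_range_sub' (fun j => θ ^ j * b j) K
    convert this using 2 <;> simp [add_comm, pow_zero]
  have key : m * (∑ k ∈ Finset.Icc 1 K, θ ^ (k - 1)) ≤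
      b 0 + δ * (∑ k ∈ Finset.Icc 1 K, θ ^ (k - 1)) := by
    have h1 : m * (∑ k ∈ Finset.Icc 1 K, θ ^ (k - 1)) =
        ∑ k ∈ Finset.Icc 1 K, θ ^ (k - 1) * m := by
      rw [Finset.mul_sum]
      exact Finset.sum_congr rfl fun k _ => mul_comm _ _
    have h2 : ∑ k ∈ Finset.Icc 1 K, θ ^ (k - 1) * m ≤
        ∑ k ∈ Finset.Icc 1 K, θ ^ (k - 1) * (b (k - 1) - θ * b k + δ) := by
      apply Finset.sum_le_sum
      intro k hk
      obtain ⟨hk1, hk2⟩ := Finset.mem_Icc.mp hk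
      have hpow : (0:ℝ) ≤ θ ^ (k - 1) := le_of_lt (pow_pos (by linarith) _)
      exact mul_le_mul_of_nonneg_left ((hma k hk).trans (hab k hk1 hk2)) hpow
    have h3 : ∑ k ∈ Finset.Icc 1 K, θ ^ (k - 1) * (b (k - 1) - θ * b k + δ) =
        (b 0 - θ ^ K * b K) + δ * (∑ k ∈ Finset.Icc 1 K, θ ^ (k - 1)) := by
      rw [Finset.mul_sum, ← htel, ← Finset.sum_add_distrib]
      exact Finset.sum_congr rfl fun k _ => by ring
    have hbK : 0 ≤ θ ^ K * b K :=
      mul_nonneg (le_of_lt (pow_pos (by linarith) _)) (hb K le_rfl)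
    linarith [h1, h2, h3]
  constructor
  · rw [div_add' _ _ _ (ne_of_gt hSpos), le_div_iff₀ hSpos]
    linarith
  · rw [hS, div_div_eq_mul_div]
    ring
end

section
/- Suppose w, z ∈ dom h satisfy ‖w − ẑ‖² ≤ 18λτ/(1+λμ), ‖z − ẑ‖² ≤ 9(2+λμ)λτ/(1+λμ), and D_h(w, ẑ) ≤ 3τ + 48(1+λL)τ/(1+λμ). Then φ^λ(w) − φ^λ(ẑ) + ((1+λμ)/(λ(2+λμ)))‖z − ẑ‖² ≤ 12τ + 57κτ, where κ := L/μ. -/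
open scoped RealInnerProductSpace
open scoped Gradient

/-!
The smooth part `f + ‖· - z̄‖² / (2λ)` of `φ^λ` has an `(L + 1/λ)`-Lipschitz gradient, so the
descent lemma at `ẑ` gives `φ^λ(w) - φ^λ(ẑ) ≤ D_h(w, ẑ) + (L + 1/λ)/2 · ‖w - ẑ‖²`. With
`ρ = (1 + λL)/(1 + λμ) ≤ κ`, the hypotheses bound the three terms by `(3 + 48ρ)τ`, `9ρτ` and
(for the `z`-term) `9τ`.
-/

theorem le_add_inner_gradient_add_of_lipschitz_gradient {E : Type*} [NormedAddCommGroup E]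
    [InnerProductSpace ℝ E] [CompleteSpace E] {f : E → ℝ} (hf : Differentiable ℝ f) {L : ℝ}
    (hLip : ∀ x y, ‖∇ f x - ∇ f y‖ ≤ L * ‖x - y‖) (a b : E) :
    f b ≤ f a + ⟪∇ f a, b - a⟫ + L / 2 * ‖b - a‖ ^ 2 := by
  set v := b - a
  set g : ℝ → ℝ := fun t => f (a + t • v) - t * ⟪∇ f a, v⟫ - L / 2 * t ^ 2 * ‖v‖ ^ 2
  have hg : ∀ t, HasDerivAt g (⟪∇ f (a + t • v) - ∇ f a, v⟫ - L * t * ‖v‖ ^ 2) t := by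
    intro t
    have hline : HasDerivAt (fun t : ℝ => a + t • v) v t := by
      simpa using ((hasDerivAt_id t).smul_const v).const_add a
    have hfline := (hf (a + t • v)).hasGradientAt.hasFDerivAt.comp_hasDerivAt t hline
    rw [InnerProductSpace.toDual_apply_apply] at hfline
    refine ((hfline.sub ((hasDerivAt_id t).mul_const ⟪∇ f a, v⟫)).sub
      (((hasDerivAt_pow 2 t).const_mul (L / 2)).mul_const (‖v‖ ^ 2))).congr_deriv ?_
    simp only [inner_sub_left, Nat.cast_ofNat]
    ring
  have hg_nonpos : ∀ t ∈ interior (Set.Icc (0 : ℝ) 1), deriv g t ≤ 0 := by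
    intro t ht
    rw [interior_Icc] at ht
    rw [(hg t).deriv, sub_nonpos]
    calc ⟪∇ f (a + t • v) - ∇ f a, v⟫ ≤ ‖∇ f (a + t • v) - ∇ f a‖ * ‖v‖ := real_inner_le_norm _ _
      _ ≤ L * ‖t • v‖ * ‖v‖ := by
        gcongr
        simpa using hLip (a + t • v) a
      _ = L * t * ‖v‖ ^ 2 := by rw [norm_smul, Real.norm_of_nonneg ht.1.le]; ring
  have hanti : AntitoneOn g (Set.Icc 0 1) :=
    antitoneOn_of_deriv_nonpos (convex_Icc 0 1) (fun t _ => (hg t).continuousAt.continuousWithinAt)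
      (fun t _ => (hg t).differentiableAt.differentiableWithinAt) hg_nonpos
  have h01 :=
    hanti (Set.left_mem_Icc.mpr zero_le_one) (Set.right_mem_Icc.mpr zero_le_one) zero_le_one
  simp only [g, zero_smul, add_zero, one_smul, v, add_sub_cancel] at h01
  linarith

theorem one_add_mul_div_one_add_mul_le_div {lam μ L : ℝ} (hlam : 0 ≤ lam) (hμ : 0 < μ)
    (hμL : μ ≤ L) : (1 + lam * L) / (1 + lam * μ) ≤ L / μ := by
  rw [div_le_div_iff₀ (by positivity) hμ]
  nlinarith

theorem stmt_17_general {d : ℕ} (f : EuclideanSpace ℝ (Fin d) → ℝ) (hf : Differentiable ℝ f)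
    (L μ : ℝ) (hμ : 0 < μ) (hμL : μ ≤ L)
    (hLip : ∀ x y, ‖gradient f x - gradient f y‖ ≤ L * ‖x - y‖)
    (h : EuclideanSpace ℝ (Fin d) → ℝ)
    (lam τ : ℝ) (hlam : 0 < lam) (hτ : 0 < τ) (zbar : EuclideanSpace ℝ (Fin d))
    (philam : EuclideanSpace ℝ (Fin d) → ℝ)
    (hphilam : ∀ x, philam x = f x + h x + 1 / (2 * lam) * ‖x - zbar‖ ^ 2)
    -- `ẑ` is the (unique) minimizer of `φ^λ`:
    (zhat : EuclideanSpace ℝ (Fin d))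
    (Dh : EuclideanSpace ℝ (Fin d) → ℝ)
    (hDh : ∀ x, Dh x = h x - h zhat + ⟪gradient f zhat + lam⁻¹ • (zhat - zbar), x - zhat⟫)
    (w z : EuclideanSpace ℝ (Fin d))
    (hwb : ‖w - zhat‖ ^ 2 ≤ 18 * lam * τ / (1 + lam * μ))
    (hzb : ‖z - zhat‖ ^ 2 ≤ 9 * (2 + lam * μ) * lam * τ / (1 + lam * μ))
    (hDhb : Dh w ≤ 3 * τ + 48 * (1 + lam * L) * τ / (1 + lam * μ)) :
    philam w - philam zhat + (1 + lam * μ) / (lam * (2 + lam * μ)) * ‖z - zhat‖ ^ 2 ≤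
      12 * τ + 57 * (L / μ) * τ := by
  have hL : 0 ≤ L := hμ.le.trans hμL
  set ρ := (1 + lam * L) / (1 + lam * μ) with hρ_def
  have hρ : ρ ≤ L / μ := one_add_mul_div_one_add_mul_le_div hlam.le hμ hμL
  have hgap : philam w - philam zhat ≤ Dh w + (L / 2 + 1 / (2 * lam)) * ‖w - zhat‖ ^ 2 := by
    have hdesc := le_add_inner_gradient_add_of_lipschitz_gradient hf hLip zhat w
    have hsq : ‖w - zbar‖ ^ 2 =
        ‖w - zhat‖ ^ 2 + 2 * ⟪zhat - zbar, w - zhat⟫ + ‖zhat - zbar‖ ^ 2 := by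
      rw [← sub_add_sub_cancel w zhat zbar, norm_add_sq_real, real_inner_comm]
    rw [hphilam, hphilam, hDh, hsq, inner_add_left, real_inner_smul_left]
    linear_combination hdesc
  have hw : (L / 2 + 1 / (2 * lam)) * ‖w - zhat‖ ^ 2 ≤ 9 * ρ * τ := by
    calc (L / 2 + 1 / (2 * lam)) * ‖w - zhat‖ ^ 2
        ≤ (L / 2 + 1 / (2 * lam)) * (18 * lam * τ / (1 + lam * μ)) := by gcongr
      _ = 9 * ρ * τ := by rw [hρ_def]; field_simp; ring
  have hz : (1 + lam * μ) / (lam * (2 + lam * μ)) * ‖z - zhat‖ ^ 2 ≤ 9 * τ := by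
    calc (1 + lam * μ) / (lam * (2 + lam * μ)) * ‖z - zhat‖ ^ 2
        ≤ (1 + lam * μ) / (lam * (2 + lam * μ)) *
            (9 * (2 + lam * μ) * lam * τ / (1 + lam * μ)) := by gcongr
      _ = 9 * τ := by field_simp
  have hD : Dh w ≤ 3 * τ + 48 * ρ * τ := hDhb.trans_eq (by rw [hρ_def]; ring)
  linarith [mul_le_mul_of_nonneg_right hρ hτ.le]

/-- With `φ^λ(x) = f(x) + h(x) + (1/(2λ))‖x - z̄‖²`,
`ẑ = argmin φ^λ`, and `D_h(x, ẑ) = h(x) - h(ẑ) + ⟨∇f(ẑ) + (ẑ - z̄)/λ, x - ẑ⟩`: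
if `w, z ∈ dom h` satisfy `‖w - ẑ‖² ≤ 18λτ/(1+λμ)`,
`‖z - ẑ‖² ≤ 9(2+λμ)λτ/(1+λμ)` and `D_h(w, ẑ) ≤ 3τ + 48(1+λL)τ/(1+λμ)`, then
`φ^λ(w) - φ^λ(ẑ) + ((1+λμ)/(λ(2+λμ)))‖z - ẑ‖² ≤ 12τ + 57κτ` where `κ = L/μ`. -/
theorem stmt_17 {d : ℕ} (f : EuclideanSpace ℝ (Fin d) → ℝ) (hf : Differentiable ℝ f)
    (L μ : ℝ) (hL : 0 < L) (hμ : 0 < μ) (hμL : μ ≤ L)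
    (hLip : ∀ x y, ‖gradient f x - gradient f y‖ ≤ L * ‖x - y‖)
    (hsc : ConvexOn ℝ Set.univ (fun x => f x - μ / 2 * ‖x‖ ^ 2))
    (s : Set (EuclideanSpace ℝ (Fin d))) (hs : s.Nonempty) (hcl : IsClosed s)
    (h : EuclideanSpace ℝ (Fin d) → ℝ) (hconv : ConvexOn ℝ s h)
    (hlsc : LowerSemicontinuousOn h s)
    (lam τ : ℝ) (hlam : 0 < lam) (hτ : 0 < τ) (zbar : EuclideanSpace ℝ (Fin d))
    (philam : EuclideanSpace ℝ (Fin d) → ℝ)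
    (hphilam : ∀ x, philam x = f x + h x + 1 / (2 * lam) * ‖x - zbar‖ ^ 2)
    -- `ẑ` is the (unique) minimizer of `φ^λ`:
    (zhat : EuclideanSpace ℝ (Fin d)) (hzhat_mem : zhat ∈ s)
    (hzhat_min : ∀ x ∈ s, philam zhat ≤ philam x)
    (Dh : EuclideanSpace ℝ (Fin d) → ℝ)
    (hDh : ∀ x, Dh x = h x - h zhat + ⟪gradient f zhat + lam⁻¹ • (zhat - zbar), x - zhat⟫)
    (w z : EuclideanSpace ℝ (Fin d)) (hw : w ∈ s) (hz : z ∈ s)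
    (hwb : ‖w - zhat‖ ^ 2 ≤ 18 * lam * τ / (1 + lam * μ))
    (hzb : ‖z - zhat‖ ^ 2 ≤ 9 * (2 + lam * μ) * lam * τ / (1 + lam * μ))
    (hDhb : Dh w ≤ 3 * τ + 48 * (1 + lam * L) * τ / (1 + lam * μ)) :
    philam w - philam zhat + (1 + lam * μ) / (lam * (2 + lam * μ)) * ‖z - zhat‖ ^ 2 ≤
      12 * τ + 57 * (L / μ) * τ :=
  stmt_17_general f hf L μ hμ hμL hLip h lam τ hlam hτ zbar philam hphilam zhat Dh hDh w z hwb hzb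
    hDhb
end
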